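/- arXiv:2010.13475 — 3 statements merged into one kernel-verified Lean document; each statement's English description precedes it below -/
import Mathlib

section
/- For every integer n ≥ 1 and every r with 0 ≤ r ≤ n−1, the centralizer of a^{2r+1}b² in U_{6n} is C_{U_{6n}}(a^{2r+1}b²) = {a^{2s} : 0 ≤ s ≤ n−1} ∪ {a^{2s+1}b² : 0 ≤ s ≤ n−1}, a subgroup of order 2n. -/
/-- The inversion automorphism of `Multiplicative (ZMod 3)` (i.e. `b ↦ b⁻¹`). -/
def negAut : MulAut (Multiplicative (ZMod 3)) := MulEquiv.inv (Multiplicative (ZMod 3))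

lemma negAut_sq : negAut * negAut = 1 := by
  ext x
  simp [negAut]

/-- The action of `ZMod (2*n)` on `Multiplicative (ZMod 3)`, where the generator acts
by inversion (negation). -/
def U6nAct (n : ℕ) : Multiplicative (ZMod (2 * n)) →* MulAut (Multiplicative (ZMod 3)) :=
  AddMonoidHom.toMultiplicativeLeft
    (ZMod.lift (2 * n) ⟨zmultiplesHom _ (Additive.ofMul negAut), by
      show ((2 * n : ℕ) : ℤ) • Additive.ofMul negAut = 0
      have : negAut ^ (2 * n) = 1 := by
        rw [pow_mul, pow_two, negAut_sq, one_pow]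
      rw [← zpow_natCast negAut, Nat.cast_mul] at this
      rw [show ((2 * n : ℕ) : ℤ) • Additive.ofMul negAut
            = Additive.ofMul (negAut ^ ((2 * n : ℕ) : ℤ)) from rfl]
      rw [Nat.cast_mul, this]; rfl⟩)

/-- The group `U_{6n} = ⟨a, b | a^(2n) = b³ = 1, a⁻¹ b a = b⁻¹⟩`, realized as the
semidirect product `(ZMod 3) ⋊ (ZMod (2n))` where the generator of `ZMod (2n)` acts by
negation. -/
abbrev U6n (n : ℕ) := SemidirectProduct (Multiplicative (ZMod 3))
    (Multiplicative (ZMod (2 * n))) (U6nAct n)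

/-- The generator `a` of `U_{6n}`, of order `2n`. -/
def Ua (n : ℕ) : U6n n := SemidirectProduct.inr (Multiplicative.ofAdd 1)

/-- The generator `b` of `U_{6n}`, of order `3`. -/
def Ub (n : ℕ) : U6n n := SemidirectProduct.inl (Multiplicative.ofAdd 1)

/-- The non-commuting graph of `U_{6n}`: vertices are the non-central elements, two
distinct vertices are adjacent iff they do not commute. -/
def ncGraph (n : ℕ) : SimpleGraph {x : U6n n // x ∉ Subgroup.center (U6n n)} where
  Adj u v := u.val * v.val ≠ v.val * u.val
  symm := ⟨fun _ _ h => fun e => h e.symm⟩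
  loopless := ⟨fun _ h => h rfl⟩

/-! Write `c = a b²`. Since `a` inverts `b`, `c² = a²`; hence `c^(2s) = a^(2s)`,
`c^(2s+1) = a^(2s+1) b²`, `c` has order `2n`, and the claimed set is the cyclic group `⟨c⟩`,
which contains `a^(2r+1) b² = c^(2r+1)` and so centralizes it. Conversely, `c^(2r+1)` acts on
`⟨b⟩ ≅ ℤ/3` by inversion, which fixes only `1`; so the centralizer meets `⟨b⟩` trivially,
embeds into `U_{6n}/⟨b⟩ ≅ ℤ/2n`, and has at most `2n` elements. -/

open SemidirectProduct Multiplicative Subgroup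

namespace SemidirectProduct

variable {N G : Type*} [CommGroup N] [Group G] {φ : G →* MulAut N}

theorem commute_inl_iff {n : N} {x : N ⋊[φ] G} : Commute (inl n) x ↔ φ x.right n = n := by
  simp only [Commute, SemiconjBy, SemidirectProduct.ext_iff, mul_left, mul_right, left_inl,
    right_inl, mul_one, one_mul, map_one, MulAut.one_apply, and_true]
  rw [mul_comm, mul_right_inj, eq_comm]

end SemidirectProduct

theorem Nat.exists_lt_two_mul_iff {n : ℕ} {p : ℕ → Prop} :
    (∃ k < 2 * n, p k) ↔ (∃ s < n, p (2 * s)) ∨ ∃ s < n, p (2 * s + 1) := by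
  constructor
  · rintro ⟨k, hk, hp⟩
    obtain ⟨s, rfl | rfl⟩ := Nat.even_or_odd' k
    · exact .inl ⟨s, by omega, hp⟩
    · exact .inr ⟨s, by omega, hp⟩
  · rintro (⟨s, hs, hp⟩ | ⟨s, hs, hp⟩)
    · exact ⟨_, by omega, hp⟩
    · exact ⟨_, by omega, hp⟩

section U6n

variable {n : ℕ}

theorem U6nAct_ofAdd_one : U6nAct n (ofAdd 1) = negAut := by
  rw [U6nAct, AddMonoidHom.coe_toMultiplicativeLeft, Function.comp_apply, Function.comp_apply,
    toAdd_ofAdd, ← Int.cast_one, ZMod.lift_coe]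
  rfl

theorem U6nAct_ofAdd_one_pow_odd (r : ℕ) : U6nAct n (ofAdd 1 ^ (2 * r + 1)) = negAut := by
  rw [map_pow, U6nAct_ofAdd_one, pow_succ, pow_mul, pow_two, negAut_sq, one_pow, one_mul]

theorem Ua_pow_two_mul_self : Ua n ^ (2 * n) = 1 := by
  rw [Ua, ← map_pow, ← ofAdd_nsmul, nsmul_one, ZMod.natCast_self, ofAdd_zero, map_one]

theorem rightHom_Ua_mul_Ub_sq : rightHom (Ua n * Ub n ^ 2) = ofAdd 1 := by
  rw [map_mul, map_pow, Ua, Ub, rightHom_inr, rightHom_inl, one_pow, mul_one]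

theorem Ua_mul_Ub_sq_sq : (Ua n * Ub n ^ 2) ^ 2 = Ua n ^ 2 := by
  ext <;> simp [Ua, Ub, pow_two, U6nAct_ofAdd_one, negAut]

theorem Ua_mul_Ub_sq_pow_two_mul (s : ℕ) : (Ua n * Ub n ^ 2) ^ (2 * s) = Ua n ^ (2 * s) := by
  rw [pow_mul, Ua_mul_Ub_sq_sq, ← pow_mul]

theorem Ua_mul_Ub_sq_pow_two_mul_add_one (s : ℕ) :
    (Ua n * Ub n ^ 2) ^ (2 * s + 1) = Ua n ^ (2 * s + 1) * Ub n ^ 2 := by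
  rw [pow_succ, Ua_mul_Ub_sq_pow_two_mul, pow_succ (Ua n), mul_assoc]

theorem orderOf_Ua_mul_Ub_sq (hn : n ≠ 0) : orderOf (Ua n * Ub n ^ 2) = 2 * n := by
  have : NeZero (2 * n) := ⟨by omega⟩
  refine Nat.dvd_antisymm ?_ ?_
  · exact orderOf_dvd_of_pow_eq_one (by rw [Ua_mul_Ub_sq_pow_two_mul, Ua_pow_two_mul_self])
  · have := orderOf_map_dvd rightHom (Ua n * Ub n ^ 2)
    rwa [rightHom_Ua_mul_Ub_sq, orderOf_ofAdd_eq_addOrderOf, ZMod.addOrderOf_one] at this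

theorem eq_one_of_commute_inl {g : U6n n} (hg : U6nAct n g.right = negAut)
    {β : Multiplicative (ZMod 3)} (h : Commute (inl β) g) : β = 1 := by
  rw [commute_inl_iff, hg] at h
  revert β
  decide

theorem rightHom_comp_centralizer_subtype_injective {g : U6n n} (hg : U6nAct n g.right = negAut) :
    Function.Injective (rightHom.comp (centralizer {g}).subtype) := by
  rw [← MonoidHom.ker_eq_bot_iff, eq_bot_iff]
  rintro ⟨z, hz⟩ hz1
  obtain ⟨β, rfl⟩ : z ∈ (inl : _ →* U6n n).range := by
    rw [range_inl_eq_ker_rightHom]; exact hz1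
  obtain rfl := eq_one_of_commute_inl hg (mem_centralizer_singleton_iff.1 hz)
  exact mem_bot.2 (Subtype.ext (map_one inl))

theorem centralizer_Ua_mul_Ub_sq_pow_odd (hn : n ≠ 0) (r : ℕ) :
    centralizer {(Ua n * Ub n ^ 2) ^ (2 * r + 1)} = zpowers (Ua n * Ub n ^ 2) := by
  have : NeZero (2 * n) := ⟨by omega⟩
  have hinj := rightHom_comp_centralizer_subtype_injective (g := (Ua n * Ub n ^ 2) ^ (2 * r + 1))
    (by rw [← rightHom_eq_right, map_pow, rightHom_Ua_mul_Ub_sq, U6nAct_ofAdd_one_pow_odd])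
  have : Finite (centralizer {(Ua n * Ub n ^ 2) ^ (2 * r + 1)}) := Finite.of_injective _ hinj
  refine (eq_of_le_of_card_ge ?_ ?_).symm
  · rw [zpowers_le, mem_centralizer_singleton_iff]
    exact (Commute.self_pow (Ua n * Ub n ^ 2) _).eq
  · calc Nat.card (centralizer {(Ua n * Ub n ^ 2) ^ (2 * r + 1)})
        ≤ Nat.card (Multiplicative (ZMod (2 * n))) := Nat.card_le_card_of_injective _ hinj
      _ = Nat.card (zpowers (Ua n * Ub n ^ 2)) := by
        rw [Nat.card_zpowers, orderOf_Ua_mul_Ub_sq hn, Nat.card_eq_fintype_card,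
          Fintype.card_multiplicative, ZMod.card]

theorem mem_zpowers_Ua_mul_Ub_sq_iff (hn : n ≠ 0) {x : U6n n} :
    x ∈ zpowers (Ua n * Ub n ^ 2) ↔ ∃ k < 2 * n, (Ua n * Ub n ^ 2) ^ k = x := by
  classical
  have hfin : IsOfFinOrder (Ua n * Ub n ^ 2) := by
    rw [← orderOf_pos_iff, orderOf_Ua_mul_Ub_sq hn]; omega
  rw [hfin.mem_zpowers_iff_mem_range_orderOf, Finset.mem_image, orderOf_Ua_mul_Ub_sq hn]
  simp only [Finset.mem_range]

end U6n

theorem U6n_centralizer_odd_ab2_general (n : ℕ) (hn : 1 ≤ n) (r : ℕ) :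
    (Subgroup.centralizer {Ua n ^ (2 * r + 1) * Ub n ^ 2} : Set (U6n n)) =
      {x | ∃ s < n, x = Ua n ^ (2 * s)} ∪
        {x | ∃ s < n, x = Ua n ^ (2 * s + 1) * Ub n ^ 2} ∧
    Nat.card (Subgroup.centralizer {Ua n ^ (2 * r + 1) * Ub n ^ 2} : Subgroup (U6n n))
      = 2 * n := by
  have hn0 : n ≠ 0 := by omega
  rw [← Ua_mul_Ub_sq_pow_two_mul_add_one, centralizer_Ua_mul_Ub_sq_pow_odd hn0, Nat.card_zpowers,
    orderOf_Ua_mul_Ub_sq hn0]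
  refine ⟨Set.ext fun x => ?_, rfl⟩
  rw [SetLike.mem_coe, mem_zpowers_Ua_mul_Ub_sq_iff hn0, Nat.exists_lt_two_mul_iff]
  simp only [Ua_mul_Ub_sq_pow_two_mul, Ua_mul_Ub_sq_pow_two_mul_add_one, Set.mem_union,
    Set.mem_ofPred_eq, eq_comm]

/-- For `0 ≤ r ≤ n-1`, the centralizer of `a^(2r+1)·b²` in `U_{6n}` is
`{a^(2s) : 0 ≤ s ≤ n-1} ∪ {a^(2s+1)·b² : 0 ≤ s ≤ n-1}`, a subgroup of order `2n`. -/
theorem U6n_centralizer_odd_ab2 (n : ℕ) (hn : 1 ≤ n) (r : ℕ) (hr : r < n) :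
    (Subgroup.centralizer {Ua n ^ (2 * r + 1) * Ub n ^ 2} : Set (U6n n)) =
      {x | ∃ s < n, x = Ua n ^ (2 * s)} ∪
        {x | ∃ s < n, x = Ua n ^ (2 * s + 1) * Ub n ^ 2} ∧
    Nat.card (Subgroup.centralizer {Ua n ^ (2 * r + 1) * Ub n ^ 2} : Subgroup (U6n n))
      = 2 * n :=
  U6n_centralizer_odd_ab2_general n hn r
end

section
/- For every integer n ≥ 1, the clique number of the non-commuting graph Γ(U_{6n}) is ω(Γ(U_{6n})) = 4, i.e., the largest complete subgraph of Γ(U_{6n}) has 4 vertices. -/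
/-! The automorphism by which `a^m` acts on `⟨b⟩ ≅ ZMod 3` lies in the subgroup generated by
inversion, so it is trivial or inversion. The elements acting trivially commute with each other,
and two elements `b^i a^m`, `b^j a^m'` acting by inversion commute iff `i = j`, because `ZMod 3`
has no element of order two. These four classes colour the non-commuting graph with four colours,
which bounds every clique; and `b, a, ba, b²a`, one from each class, pairwise do not commute. -/

theorem zpow_eq_one_or_eq_self_of_mul_self_eq_one {G : Type*} [Group G] {σ : G} (hσ : σ * σ = 1)
    (k : ℤ) : σ ^ k = 1 ∨ σ ^ k = σ := by
  have hsq : σ ^ (2 : ℤ) = 1 := by rw [zpow_two, hσ]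
  rcases Int.even_or_odd' k with ⟨m, rfl | rfl⟩
  · left; rw [zpow_mul, hsq, one_zpow]
  · right; rw [zpow_add_one, zpow_mul, hsq, one_zpow, one_mul]

theorem SemidirectProduct.commute_iff {N G : Type*} [Group N] [CommGroup G]
    {φ : G →* MulAut N} (g h : N ⋊[φ] G) :
    Commute g h ↔ g.left * φ g.right h.left = h.left * φ h.right g.left := by
  rw [Commute, SemiconjBy, SemidirectProduct.ext_iff]
  simp [mul_comm g.right]

theorem negAut_apply (x : Multiplicative (ZMod 3)) : negAut x = x⁻¹ := rfl

theorem negAut_ne_one : negAut ≠ 1 := fun h =>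
  absurd (DFunLike.congr_fun h (Multiplicative.ofAdd 1)) (by decide)

theorem U6nAct_ofAdd_intCast {n : ℕ} (k : ℤ) :
    U6nAct n (Multiplicative.ofAdd (k : ZMod (2 * n))) = negAut ^ k := by
  simp [U6nAct]

theorem U6nAct_eq_one_or_eq_negAut {n : ℕ} (m : Multiplicative (ZMod (2 * n))) :
    U6nAct n m = 1 ∨ U6nAct n m = negAut := by
  obtain ⟨k, hk⟩ := ZMod.intCast_surjective (Multiplicative.toAdd m)
  rw [← ofAdd_toAdd m, ← hk, U6nAct_ofAdd_intCast]
  exact zpow_eq_one_or_eq_self_of_mul_self_eq_one negAut_sq k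

namespace U6n

variable {n : ℕ}

theorem commute_of_act_eq_one {g h : U6n n} (hg : U6nAct n g.right = 1)
    (hh : U6nAct n h.right = 1) : Commute g h := by
  rw [SemidirectProduct.commute_iff, hg, hh, MulAut.one_apply, MulAut.one_apply, mul_comm]

theorem commute_iff_left_eq_one {g h : U6n n} (hg : U6nAct n g.right = 1)
    (hh : U6nAct n h.right = negAut) : Commute g h ↔ g.left = 1 := by
  have key : ∀ x y : Multiplicative (ZMod 3), x * y = y * x⁻¹ ↔ x = 1 := by decide
  rw [SemidirectProduct.commute_iff, hg, hh, MulAut.one_apply, negAut_apply, key]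

theorem commute_iff_left_eq {g h : U6n n} (hg : U6nAct n g.right = negAut)
    (hh : U6nAct n h.right = negAut) : Commute g h ↔ g.left = h.left := by
  have key : ∀ x y : Multiplicative (ZMod 3), x * y⁻¹ = y * x⁻¹ ↔ x = y := by decide
  rw [SemidirectProduct.commute_iff, hg, hh, negAut_apply, negAut_apply, key]

def commClass (g : U6n n) : Option (ZMod 3) :=
  if U6nAct n g.right = 1 then none else some (Multiplicative.toAdd g.left)

theorem commute_of_commClass_eq {g h : U6n n} (hgh : commClass g = commClass h) :
    Commute g h := by
  unfold commClass at hgh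
  rcases U6nAct_eq_one_or_eq_negAut g.right with hg | hg <;>
    rcases U6nAct_eq_one_or_eq_negAut h.right with hh | hh
  · exact commute_of_act_eq_one hg hh
  · simp [hg, hh, negAut_ne_one] at hgh
  · simp [hg, hh, negAut_ne_one] at hgh
  · simp only [hg, hh, negAut_ne_one, if_false, Option.some_inj] at hgh
    exact (commute_iff_left_eq hg hh).2 hgh

def classRep (n : ℕ) : Option (ZMod 3) → U6n n
  | none => Ub n
  | some x => ⟨Multiplicative.ofAdd x, Multiplicative.ofAdd 1⟩

theorem U6nAct_classRep_some (x : ZMod 3) : U6nAct n (classRep n (some x)).right = negAut := by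
  exact_mod_cast U6nAct_ofAdd_intCast (n := n) 1

theorem not_commute_classRep {c d : Option (ZMod 3)} (hcd : c ≠ d) :
    ¬Commute (classRep n c) (classRep n d) := by
  rcases c with _ | x <;> rcases d with _ | y
  · exact absurd rfl hcd
  · rw [commute_iff_left_eq_one (map_one _) (U6nAct_classRep_some y)]
    exact (by decide : Multiplicative.ofAdd (1 : ZMod 3) ≠ 1)
  · rw [Commute.symm_iff, commute_iff_left_eq_one (map_one _) (U6nAct_classRep_some x)]
    exact (by decide : Multiplicative.ofAdd (1 : ZMod 3) ≠ 1)
  · rw [commute_iff_left_eq (U6nAct_classRep_some x) (U6nAct_classRep_some y)]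
    simpa [classRep] using hcd

theorem classRep_not_mem_center (c : Option (ZMod 3)) :
    classRep n c ∉ Subgroup.center (U6n n) := by
  obtain ⟨d, hdc⟩ := exists_ne c
  exact fun hc => not_commute_classRep hdc (Subgroup.mem_center_iff.1 hc _)

end U6n

def ncGraphColoring (n : ℕ) : (ncGraph n).Coloring (Option (ZMod 3)) :=
  SimpleGraph.Coloring.mk (fun v => U6n.commClass v.val) fun huv hc =>
    huv (U6n.commute_of_commClass_eq hc)

theorem U6n_clique_number_general (n : ℕ) :
    IsGreatest {k | ∃ S : Finset {x : U6n n // x ∉ Subgroup.center (U6n n)},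
      (ncGraph n).IsNClique k S} 4 := by
  let rep : (⊤ : SimpleGraph (Option (ZMod 3))) →g ncGraph n :=
    ⟨fun c => ⟨U6n.classRep n c, U6n.classRep_not_mem_center c⟩,
      fun hcd => U6n.not_commute_classRep hcd⟩
  exact ⟨⟨_, SimpleGraph.isNClique_map_copy_top
      (rep.toCopy (SimpleGraph.Hom.injective_of_top_hom rep))⟩,
    fun _ ⟨_, hS⟩ => hS.card_eq ▸ hS.isClique.card_le_of_coloring (ncGraphColoring n)⟩

/-- The clique number of the non-commuting graph of `U_{6n}` is `4`: there is a clique of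
size `4`, and every clique has size at most `4`. -/
theorem U6n_clique_number (n : ℕ) (hn : 1 ≤ n) :
    IsGreatest {k | ∃ S : Finset {x : U6n n // x ∉ Subgroup.center (U6n n)},
      (ncGraph n).IsNClique k S} 4 :=
  U6n_clique_number_general n
end

section
/- Let n ≥ 1 and let Γ = Γ(U_{6n}) be the non-commuting graph of U_{6n}. The metric dimension of Γ is β(Γ) = 3 if n = 1, and β(Γ) = 5n − 4 if n > 1. -/
/-- `W` is a resolving set for the non-commuting graph of `U_{6n}` if every pair of
distinct vertices is distinguished by its distances to some element of `W`. -/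
def Resolving (n : ℕ) (W : Finset {x : U6n n // x ∉ Subgroup.center (U6n n)}) : Prop :=
  ∀ u v : {x : U6n n // x ∉ Subgroup.center (U6n n)}, u ≠ v →
    ∃ w ∈ W, (ncGraph n).dist u w ≠ (ncGraph n).dist v w

/-!
Two non-central elements `b^i a^j` of `U_{6n}` commute exactly when they lie in the same one of
four classes: the `2n` elements with `j` even, or, for each `i`, the `n` elements with `j` odd.
So `Γ(U_{6n})` is the complete multipartite graph `K_{2n,n,n,n}`, in which distinct vertices are
at distance `1` or `2` according as they lie in different parts or in the same part. Hence `W`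
is resolving iff it misses at most one vertex of each part and misses at most one part entirely.
For `n > 1` this costs one vertex per part, `5n - 4`; for `n = 1` the three parts of `K_{2,1,1,1}`
that are singletons must all but one lie in `W`, which gives `3`.
-/

namespace SimpleGraph

variable {V ι : Type*}

def IsResolving (G : SimpleGraph V) (W : Finset V) : Prop :=
  ∀ u v, u ≠ v → ∃ w ∈ W, G.dist u w ≠ G.dist v w

/-! `(⊤ : SimpleGraph ι).comap f` is the complete multipartite graph whose parts are the fibres
of `f`. -/
section CompleteMultipartite

open Finset

variable {f : V → ι}

theorem dist_comap_top [DecidableEq V] [DecidableEq ι] (hf : ∃ a b, f a ≠ f b) (u w : V) :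
    ((⊤ : SimpleGraph ι).comap f).dist u w = if u = w then 0 else if f u = f w then 2 else 1 := by
  split_ifs with huw hc
  · rw [huw, dist_self]
  · obtain ⟨z, hz⟩ : ∃ z, f z ≠ f u := by
      obtain ⟨a, b, hab⟩ := hf
      by_cases ha : f a = f u
      · exact ⟨b, fun hb => hab (ha.trans hb.symm)⟩
      · exact ⟨a, ha⟩
    let p : ((⊤ : SimpleGraph ι).comap f).Walk u w :=
      Walk.cons (Ne.symm hz : f u ≠ f z) (Walk.cons (hc ▸ hz : f z ≠ f w) Walk.nil)
    have hle : ((⊤ : SimpleGraph ι).comap f).dist u w ≤ 2 := dist_le p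
    have hne0 : ((⊤ : SimpleGraph ι).comap f).dist u w ≠ 0 :=
      dist_ne_zero_iff_ne_and_reachable.mpr ⟨huw, ⟨p⟩⟩
    have hne1 : ((⊤ : SimpleGraph ι).comap f).dist u w ≠ 1 := fun h =>
      (dist_eq_one_iff_adj.mp h : f u ≠ f w) hc
    omega
  · exact dist_eq_one_iff_adj.mpr hc

theorem isResolving_comap_top_iff (hf : ∃ a b, f a ≠ f b) (W : Finset V) :
    ((⊤ : SimpleGraph ι).comap f).IsResolving W ↔
      Set.InjOn f (↑W)ᶜ ∧ ∀ u ∉ W, ∀ v ∉ W, f u ≠ f v → ∃ w ∈ W, f w = f u ∨ f w = f v := by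
  classical
  simp only [IsResolving, dist_comap_top hf]
  constructor
  · intro hW
    refine ⟨fun u hu v hv huv => ?_, fun u hu v hv huv => ?_⟩
    · by_contra hne
      obtain ⟨w, hw, hd⟩ := hW u v hne
      grind
    · obtain ⟨w, hw, hd⟩ := hW u v (fun h => huv (h ▸ rfl))
      grind
  · rintro ⟨hinj, hcls⟩ u v huv
    by_cases hu : u ∈ W
    · exact ⟨u, hu, by grind⟩
    by_cases hv : v ∈ W
    · exact ⟨v, hv, by grind⟩
    have hfuv : f u ≠ f v := fun h => huv (hinj hu hv h)
    obtain ⟨w, hw, hfw⟩ := hcls u hu v hv hfuv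
    exact ⟨w, hw, by grind⟩

theorem IsResolving.exists_mem_of_ne (hf : ∃ a b, f a ≠ f b) {W : Finset V}
    (hW : ((⊤ : SimpleGraph ι).comap f).IsResolving W) {u v : V} (huv : f u ≠ f v) :
    ∃ w ∈ W, f w = f u ∨ f w = f v := by
  by_cases hu : u ∈ W
  · exact ⟨u, hu, .inl rfl⟩
  by_cases hv : v ∈ W
  · exact ⟨v, hv, .inr rfl⟩
  exact ((isResolving_comap_top_iff hf W).mp hW).2 u hu v hv huv

theorem isResolving_compl_image [Fintype V] [DecidableEq V] [DecidableEq ι]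
    (hf : ∃ a b, f a ≠ f b) {s : ι → V} (hs : Function.LeftInverse f s) {C : Finset ι}
    (hC : ∀ c ∈ C, ∀ d ∈ C, c ≠ d → 1 < #{v | f v = c} ∨ 1 < #{v | f v = d}) :
    ((⊤ : SimpleGraph ι).comap f).IsResolving (C.image s)ᶜ := by
  have hmem {c : ι} (hc : c ∈ C) (h : 1 < #{v | f v = c}) : ∃ w ∈ (C.image s)ᶜ, f w = c := by
    obtain ⟨w, hw, hws⟩ := exists_mem_ne h (s c)
    refine ⟨w, mem_compl.mpr fun hwC => hws ?_, (mem_filter.mp hw).2⟩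
    obtain ⟨d, -, rfl⟩ := mem_image.mp hwC
    rw [← (mem_filter.mp hw).2, hs d]
  refine (isResolving_comap_top_iff hf _).mpr ⟨fun u hu v hv huv => ?_, fun u hu v hv huv => ?_⟩
  · obtain ⟨c, -, rfl⟩ := mem_image.mp (by simpa using hu)
    obtain ⟨d, -, rfl⟩ := mem_image.mp (by simpa using hv)
    rw [hs c, hs d] at huv
    rw [huv]
  · obtain ⟨c, hc, rfl⟩ := mem_image.mp (not_not.mp (mem_compl.not.mp hu))
    obtain ⟨d, hd, rfl⟩ := mem_image.mp (not_not.mp (mem_compl.not.mp hv))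
    rw [hs c, hs d] at huv ⊢
    rcases hC c hc d hd huv with h | h
    · exact (hmem hc h).imp fun w hw => ⟨hw.1, .inl hw.2⟩
    · exact (hmem hd h).imp fun w hw => ⟨hw.1, .inr hw.2⟩

variable [Fintype V] [DecidableEq ι]

theorem IsResolving.card_fiber_le (hf : ∃ a b, f a ≠ f b) {W : Finset V}
    (hW : ((⊤ : SimpleGraph ι).comap f).IsResolving W) (c : ι) :
    #{v | f v = c} ≤ #{w ∈ W | f w = c} + 1 := by
  classical
  have hinj := ((isResolving_comap_top_iff hf W).mp hW).1
  have hout : #(({v | f v = c} : Finset V) \ {w ∈ W | f w = c}) ≤ 1 := by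
    refine card_le_one.mpr fun u hu v hv => hinj ?_ ?_ ?_ <;> grind
  grw [card_le_card_sdiff_add_card (t := {w ∈ W | f w = c}), hout, add_comm]

theorem IsResolving.card_add_card_le [Fintype ι] (hf : ∃ a b, f a ≠ f b) {W : Finset V}
    (hW : ((⊤ : SimpleGraph ι).comap f).IsResolving W) :
    Fintype.card V + #{c | #{v | f v = c} = 1} ≤
      #W + Fintype.card ι + min #{c | #{v | f v = c} = 1} 1 := by
  set S : Finset ι := {c | #{v | f v = c} = 1}
  set T : Finset ι := {c ∈ S | #{w ∈ W | f w = c} = 0} with hT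
  -- At most one part is missed entirely by `W`, so `#T ≤ 1`; every part has all but at most one
  -- of its vertices in `W`, and a singleton part outside `T` lies in `W`.
  have hTS : #T ≤ #S := Finset.card_filter_le _ _
  have hT1 : #T ≤ 1 := by
    refine card_le_one.mpr fun c hc d hd => by_contra fun hcd => ?_
    simp only [hT, S, mem_filter, mem_univ, true_and, card_eq_zero, filter_eq_empty_iff] at hc hd
    obtain ⟨u, hu⟩ := card_pos.mp (by omega : 0 < #{v | f v = c})
    obtain ⟨v, hv⟩ := card_pos.mp (by omega : 0 < #{v | f v = d})
    simp only [mem_filter, mem_univ, true_and] at hu hv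
    obtain ⟨w, hw, hfw | hfw⟩ := hW.exists_mem_of_ne hf (u := u) (v := v) (by grind)
    · exact hc.2 hw (hfw.trans hu)
    · exact hd.2 hw (hfw.trans hv)
  have hpart (c : ι) : #{v | f v = c} + (if c ∈ S then 1 else 0) ≤
      #{w ∈ W | f w = c} + 1 + (if c ∈ T then 1 else 0) := by
    have := hW.card_fiber_le hf c
    have hmemS : c ∈ S ↔ #{v | f v = c} = 1 := by simp [S]
    have hmemT : c ∈ T ↔ c ∈ S ∧ #{w ∈ W | f w = c} = 0 := mem_filter
    split_ifs <;> grind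
  have hsum := sum_le_sum fun c (_ : c ∈ univ) => hpart c
  rw [sum_add_distrib, sum_add_distrib, sum_add_distrib, ← card_eq_sum_card_fiberwise
    (fun _ _ => mem_univ _), ← card_eq_sum_card_fiberwise (fun _ _ => mem_univ _),
    sum_boole, sum_boole, sum_const, card_univ, smul_eq_mul, mul_one] at hsum
  simp only [filter_mem_eq_inter, univ_inter, Nat.cast_id, card_univ] at hsum
  omega

end CompleteMultipartite

end SimpleGraph

abbrev NonCentral (G : Type*) [Group G] := {x : G // x ∉ Subgroup.center G}

instance (n : ℕ) [NeZero n] : Fintype (U6n n) :=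
  Fintype.ofEquiv _ SemidirectProduct.equivProd.symm

instance (n : ℕ) : DecidableEq (U6n n) := SemidirectProduct.equivProd.decidableEq

namespace U6n

open Finset Multiplicative SemidirectProduct

variable {n : ℕ}

def parity (n : ℕ) : ZMod (2 * n) →+* ZMod 2 := ZMod.castHom (dvd_mul_right 2 n) (ZMod 2)

theorem card_parity_fiber [NeZero n] (e : ZMod 2) : #{j : ZMod (2 * n) | parity n j = e} = n := by
  have hrange (e : ZMod 2) : e ∈ Set.range (parity n) := ⟨e.val, by simp [parity]⟩
  have hsum := card_eq_sum_card_fiberwise (s := (univ : Finset (ZMod (2 * n))))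
    (t := univ) (f := parity n) (fun _ _ => mem_univ _)
  rw [card_univ, ZMod.card, Fintype.sum_eq_add 0 1 (by decide) (by intro x; fin_cases x <;> tauto),
    AddMonoidHom.card_fiber_eq_of_mem_range (parity n) (hrange 1) (hrange 0)] at hsum
  rw [AddMonoidHom.card_fiber_eq_of_mem_range (parity n) (hrange e) (hrange 0)]
  omega

theorem negAut_zpow (k : ℤ) (x : Multiplicative (ZMod 3)) :
    (negAut ^ k) x = if Even k then x else x⁻¹ := by
  obtain ⟨m, rfl | rfl⟩ := Int.even_or_odd' k
  · rw [zpow_mul, zpow_two, negAut_sq, one_zpow, if_pos (even_two_mul m)]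
    rfl
  · rw [zpow_add_one, zpow_mul, zpow_two, negAut_sq, one_zpow, one_mul,
      if_neg (Int.not_even_iff_odd.mpr (odd_two_mul_add_one m))]
    rfl

theorem U6nAct_apply (r : Multiplicative (ZMod (2 * n))) (x : Multiplicative (ZMod 3)) :
    U6nAct n r x = if parity n r.toAdd = 0 then x else x⁻¹ := by
  obtain ⟨k, hk⟩ := ZMod.intCast_surjective r.toAdd
  rw [← ofAdd_toAdd r, ← hk]
  simp only [U6nAct, AddMonoidHom.toMultiplicativeLeft_apply_apply, toAdd_ofAdd, ZMod.lift_coe,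
    zmultiplesHom_apply, toMul_zsmul, toMul_ofMul, negAut_zpow, map_intCast,
    ZMod.intCast_eq_zero_iff_even]

theorem mul_comm_iff (g h : U6n n) :
    g * h = h * g ↔ g.left * U6nAct n g.right h.left = h.left * U6nAct n h.right g.left := by
  rw [SemidirectProduct.ext_iff, mul_left, mul_left, mul_right, mul_right, mul_comm g.right,
    and_iff_left rfl]

theorem mem_center_iff (g : U6n n) :
    g ∈ Subgroup.center (U6n n) ↔ parity n g.right.toAdd = 0 ∧ g.left = 1 := by
  rw [Subgroup.mem_center_iff]
  constructor
  · intro hg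
    have hb := hg (Ub n)
    have ha := hg (Ua n)
    rw [mul_comm_iff, U6nAct_apply, U6nAct_apply] at hb ha
    simp only [Ub, Ua, left_inl, right_inl, left_inr, right_inr, toAdd_one, toAdd_ofAdd, map_zero,
      map_one, if_pos, one_ne_zero, if_false] at hb ha
    revert ha hb
    generalize parity n g.right.toAdd = e
    generalize g.left = a
    decide +revert
  · rintro ⟨he, ha⟩ h
    rw [mul_comm_iff, U6nAct_apply, U6nAct_apply, he, ha]
    simp

/-- The commuting class of a non-central element `b^i a^j`: one class for `j` even, and one for
each `i` when `j` is odd. -/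
def cls (g : U6n n) : Option (ZMod 3) :=
  if parity n g.right.toAdd = 0 then none else some g.left.toAdd

theorem mul_comm_iff_cls {g h : U6n n} (hg : g ∉ Subgroup.center (U6n n))
    (hh : h ∉ Subgroup.center (U6n n)) : g * h = h * g ↔ cls g = cls h := by
  rw [mem_center_iff] at hg hh
  rw [mul_comm_iff, U6nAct_apply, U6nAct_apply, cls, cls]
  revert hg hh
  generalize parity n g.right.toAdd = e
  generalize parity n h.right.toAdd = f
  generalize g.left = a
  generalize h.left = b
  decide +revert

theorem ncGraph_eq_comap :
    ncGraph n = (⊤ : SimpleGraph (Option (ZMod 3))).comap (fun v => cls v.1) := by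
  ext u v
  exact (mul_comm_iff_cls u.2 v.2).not

theorem resolving_iff (W : Finset (NonCentral (U6n n))) :
    Resolving n W ↔
      ((⊤ : SimpleGraph (Option (ZMod 3))).comap (fun v => cls v.1)).IsResolving W := by
  rw [← ncGraph_eq_comap]
  rfl

variable [NeZero n]

theorem card_cls_fiber_eq (c : Option (ZMod 3)) :
    #{v : NonCentral (U6n n) | cls v.1 = c} =
      #{p : ZMod 3 × ZMod (2 * n) | ¬(parity n p.2 = 0 ∧ p.1 = 0) ∧
        (if parity n p.2 = 0 then none else some p.1) = c} := by
  have hsub : #{v : NonCentral (U6n n) | cls v.1 = c} =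
      #{g : U6n n | g ∉ Subgroup.center (U6n n) ∧ cls g = c} := by
    rw [← Fintype.card_subtype, ← Fintype.card_subtype]
    exact Fintype.card_congr (Equiv.subtypeSubtypeEquivSubtypeInter _ (fun g => cls g = c))
  rw [hsub]
  refine card_equiv (equivProd.trans (Equiv.prodCongr toAdd toAdd)) fun g => ?_
  simp [mem_center_iff, cls]

theorem card_cls_none : #{v : NonCentral (U6n n) | cls v.1 = none} = 2 * n := by
  have hprod : ({p | ¬(parity n p.2 = 0 ∧ p.1 = 0) ∧
      (if parity n p.2 = 0 then none else some p.1) = none} : Finset (ZMod 3 × ZMod (2 * n))) =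
      ({a | a ≠ 0} : Finset (ZMod 3)) ×ˢ ({j | parity n j = 0} : Finset (ZMod (2 * n))) := by
    ext ⟨a, j⟩
    simp only [mem_filter, mem_univ, true_and, mem_product]
    generalize parity n j = e
    decide +revert
  rw [card_cls_fiber_eq, hprod, card_product, card_parity_fiber]
  rfl

theorem card_cls_some (x : ZMod 3) : #{v : NonCentral (U6n n) | cls v.1 = some x} = n := by
  have hprod : ({p | ¬(parity n p.2 = 0 ∧ p.1 = 0) ∧
      (if parity n p.2 = 0 then none else some p.1) = some x} : Finset (ZMod 3 × ZMod (2 * n))) =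
      ({x} : Finset (ZMod 3)) ×ˢ ({j | parity n j = 1} : Finset (ZMod (2 * n))) := by
    ext ⟨a, j⟩
    simp only [mem_filter, mem_univ, true_and, mem_product, mem_singleton]
    generalize parity n j = e
    decide +revert
  rw [card_cls_fiber_eq, hprod, card_product, card_parity_fiber, card_singleton, one_mul]

theorem card_nonCentral : Fintype.card (NonCentral (U6n n)) = 5 * n := by
  rw [← card_univ, card_eq_sum_card_fiberwise (f := fun v => cls v.1) (t := univ)
    fun _ _ => mem_univ _, Fintype.sum_option, card_cls_none]
  simp only [card_cls_some, sum_const, card_univ, ZMod.card, smul_eq_mul]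
  ring

theorem exists_leftInverse_cls :
    ∃ s : Option (ZMod 3) → NonCentral (U6n n), Function.LeftInverse (fun v => cls v.1) s := by
  have hne (c : Option (ZMod 3)) : ∃ v : NonCentral (U6n n), cls v.1 = c := by
    have hpos : 0 < #{v : NonCentral (U6n n) | cls v.1 = c} := by
      cases c with
      | none => rw [card_cls_none]; exact Nat.mul_pos two_pos (NeZero.pos n)
      | some x => rw [card_cls_some]; exact NeZero.pos n
    obtain ⟨v, hv⟩ := card_pos.mp hpos
    exact ⟨v, (mem_filter.mp hv).2⟩
  choose s hs using hne
  exact ⟨s, hs⟩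

theorem card_singleton_classes :
    #{c | #{v : NonCentral (U6n n) | cls v.1 = c} = 1} = if n = 1 then 3 else 0 := by
  have hfib (c : Option (ZMod 3)) :
      #{v : NonCentral (U6n n) | cls v.1 = c} = c.elim (2 * n) fun _ => n := by
    cases c
    exacts [card_cls_none, card_cls_some _]
  simp only [hfib]
  split_ifs with hn
  · subst hn
    decide
  · rw [card_eq_zero, filter_eq_empty_iff]
    rintro (_ | x) - <;> simp only [Option.elim] <;> omega

theorem exists_cls_ne : ∃ a b : NonCentral (U6n n), cls a.1 ≠ cls b.1 := by
  obtain ⟨s, hs⟩ := exists_leftInverse_cls (n := n)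
  exact ⟨s none, s (some 0), by simp [hs _]⟩

theorem exists_resolving_card_eq_three : ∃ W : Finset (NonCentral (U6n 1)), Resolving 1 W ∧ #W = 3 := by
  obtain ⟨s, hs⟩ := exists_leftInverse_cls (n := 1)
  refine ⟨(({none, some 0} : Finset _).image s)ᶜ,
    (resolving_iff _).mpr (SimpleGraph.isResolving_compl_image exists_cls_ne hs ?_), ?_⟩
  · intro c hc d hd hcd
    simp only [mem_insert, mem_singleton] at hc hd
    rcases hc with rfl | rfl <;> rcases hd with rfl | rfl <;> simp [card_cls_none] at hcd ⊢
  · rw [card_compl, card_image_of_injective _ hs.injective, card_nonCentral]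
    rfl

theorem exists_resolving_card_eq (hn : 2 ≤ n) :
    ∃ W : Finset (NonCentral (U6n n)), Resolving n W ∧ #W = 5 * n - 4 := by
  obtain ⟨s, hs⟩ := exists_leftInverse_cls (n := n)
  refine ⟨(univ.image s)ᶜ,
    (resolving_iff _).mpr (SimpleGraph.isResolving_compl_image exists_cls_ne hs ?_), ?_⟩
  · rintro (_ | x) - d - -
    · exact .inl (by rw [card_cls_none]; omega)
    · exact .inl (by rw [card_cls_some]; omega)
  · rw [card_compl, card_image_of_injective _ hs.injective, card_nonCentral, card_univ,
      Fintype.card_option, ZMod.card]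

theorem le_card_of_resolving {W : Finset (NonCentral (U6n n))} (hW : Resolving n W) :
    (if n = 1 then 3 else 5 * n - 4) ≤ #W := by
  have hbound := ((resolving_iff W).mp hW).card_add_card_le exists_cls_ne
  rw [card_nonCentral, card_singleton_classes, Fintype.card_option, ZMod.card] at hbound
  split_ifs at hbound ⊢ <;> omega

end U6n

/-- The metric dimension of the non-commuting graph of `U_{6n}` is `3` if `n = 1` and
`5n - 4` if `n > 1`. -/
theorem U6n_metric_dimension (n : ℕ) (hn : 1 ≤ n) :
    IsLeast {k | ∃ W : Finset {x : U6n n // x ∉ Subgroup.center (U6n n)},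
      Resolving n W ∧ W.card = k} (if n = 1 then 3 else 5 * n - 4) := by
  have : NeZero n := ⟨by omega⟩
  refine ⟨?_, fun k ⟨W, hW, hk⟩ => hk ▸ U6n.le_card_of_resolving hW⟩
  split_ifs with hn1
  · subst hn1
    exact U6n.exists_resolving_card_eq_three
  · exact U6n.exists_resolving_card_eq (by omega)
end
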